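/- Let G be a connected finite simple graph with vertex set V(G) = {v_1, …, v_n} whose diameter is 2, and let μ(G) be the Mycielskian of G. Then ∑_{(i,j) : 1 ≤ i, j ≤ n, i ≠ j} d_{μ(G)}(v_i, x_j)·deg_G(v_i)·deg_G(v_j) = 2·Gut(G), where the sum runs over all ordered pairs of distinct indices (i, j). -/

import Mathlib

open SimpleGraph Finset

/-- The Mycielskian of a simple graph `G`. Vertices: `some (Sum.inl a)` are the original
vertices `v_a`, `some (Sum.inr a)` are the copies `x_a`, and `none` is the extra vertex `x`. -/
def mycielskian {V : Type*} (G : SimpleGraph V) : SimpleGraph (Option (V ⊕ V)) where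
  Adj u v := match u, v with
    | some (Sum.inl a), some (Sum.inl b) => G.Adj a b
    | some (Sum.inl a), some (Sum.inr b) => G.Adj a b
    | some (Sum.inr a), some (Sum.inl b) => G.Adj a b
    | some (Sum.inr _), none => True
    | none, some (Sum.inr _) => True
    | _, _ => False
  symm := by
    constructor
    rintro (_ | (a | a)) (_ | (b | b)) h <;> first | exact h.symm | exact h
  loopless := by
    constructor
    rintro (_ | (a | a)) h
    · exact h
    · exact G.loopless.irrefl a h
    · exact h

instance mycielskian.adjDecidable {V : Type*} (G : SimpleGraph V) [DecidableRel G.Adj] :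
    DecidableRel (mycielskian G).Adj := fun u v =>
  match u, v with
  | some (Sum.inl a), some (Sum.inl b) => inferInstanceAs (Decidable (G.Adj a b))
  | some (Sum.inl a), some (Sum.inr b) => inferInstanceAs (Decidable (G.Adj a b))
  | some (Sum.inr a), some (Sum.inl b) => inferInstanceAs (Decidable (G.Adj a b))
  | some (Sum.inr _), none => inferInstanceAs (Decidable True)
  | none, some (Sum.inr _) => inferInstanceAs (Decidable True)
  | none, none => inferInstanceAs (Decidable False)
  | none, some (Sum.inl _) => inferInstanceAs (Decidable False)
  | some (Sum.inl _), none => inferInstanceAs (Decidable False)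
  | some (Sum.inr _), some (Sum.inr _) => inferInstanceAs (Decidable False)

/-- The first Zagreb index `M₁(G) = ∑ v (deg v)²`, as a rational number. -/
def zagreb1 {V : Type*} [Fintype V] (G : SimpleGraph V) [DecidableRel G.Adj] : ℚ :=
  ∑ v, (G.degree v : ℚ) ^ 2

/-- The second Zagreb index `M₂(G) = ∑_{uv ∈ E(G)} deg u · deg v`, as a rational number. -/
def zagreb2 {V : Type*} [Fintype V] (G : SimpleGraph V) [DecidableRel G.Adj] : ℚ :=
  ∑ e ∈ G.edgeFinset,
    Sym2.lift ⟨fun u v => (G.degree u : ℚ) * (G.degree v : ℚ), fun u v => by ring⟩ e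

/-- The Gutman index `Gut(H) = ∑_{{u,v} ⊆ V(H), u ≠ v} d(u,v)·deg u·deg v`, the sum running
over unordered pairs of distinct vertices (realized as half the sum over ordered pairs). -/
noncomputable def gutmanIndex {V : Type*} [Fintype V] [DecidableEq V] (H : SimpleGraph V)
    [DecidableRel H.Adj] : ℚ :=
  (∑ u, ∑ v, if u = v then 0 else (H.dist u v : ℚ) * H.degree u * H.degree v) / 2

/-- The degree distance `DD(G) = ∑_{{u,v} ⊆ V(G), u ≠ v} d(u,v)·(deg u + deg v)`, the sum
running over unordered pairs of distinct vertices (realized as half the ordered sum). -/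
noncomputable def degreeDistance {V : Type*} [Fintype V] [DecidableEq V] (H : SimpleGraph V)
    [DecidableRel H.Adj] : ℚ :=
  (∑ u, ∑ v, if u = v then 0 else (H.dist u v : ℚ) * (H.degree u + H.degree v)) / 2

/-! For `i ≠ j`, replacing the last vertex `v_j` of a geodesic from `v_i` to `v_j` by its copy
`x_j` gives a walk of the same length in `μ(G)`, and `v_i x_j` is an edge of `μ(G)` exactly when
`v_i v_j` is an edge of `G`. Hence `d_{μ(G)}(v_i, x_j) = d_G(v_i, v_j)` whenever
`d_G(v_i, v_j) ≤ 2`, which for a graph of diameter 2 covers all pairs `i ≠ j`; the sum is then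
the ordered form of `Gut(G)`. -/

namespace mycielskian

variable {V : Type*} (G : SimpleGraph V)

def inlHom : G →g mycielskian G where
  toFun a := some (Sum.inl a)
  map_rel' h := h

variable {G}

@[simp]
lemma adj_inl_inr {a b : V} :
    (mycielskian G).Adj (some (Sum.inl a)) (some (Sum.inr b)) ↔ G.Adj a b :=
  Iff.rfl

lemma exists_walk_inl_inr_length_eq_dist {i j : V} (hreach : G.Reachable i j) (hij : i ≠ j) :
    ∃ w : (mycielskian G).Walk (some (Sum.inl i)) (some (Sum.inr j)), w.length = G.dist i j := by
  obtain ⟨p, hp⟩ := hreach.symm.exists_walk_length_eq_dist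
  cases p with
  | nil => exact absurd rfl hij
  | @cons _ k _ hjk q =>
    have hjk' : (mycielskian G).Adj (some (Sum.inr j)) (inlHom G k) := hjk
    let w := (Walk.cons hjk' (q.map (inlHom G))).reverse
    have hw : w.length = G.dist i j := by
      rw [Walk.length_reverse, Walk.length_cons, Walk.length_map, dist_comm, ← hp,
        Walk.length_cons]
    exact ⟨w, hw⟩

lemma dist_inl_inr_of_dist_le_two {i j : V} (hreach : G.Reachable i j) (hij : i ≠ j)
    (h2 : G.dist i j ≤ 2) :
    (mycielskian G).dist (some (Sum.inl i)) (some (Sum.inr j)) = G.dist i j := by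
  obtain ⟨w, hw⟩ := exists_walk_inl_inr_length_eq_dist hreach hij
  have hle := hw ▸ dist_le w
  have hpos : 0 < (mycielskian G).dist (some (Sum.inl i)) (some (Sum.inr j)) :=
    Reachable.pos_dist_of_ne ⟨w⟩ (by simp)
  have hGpos : 0 < G.dist i j := hreach.pos_dist_of_ne hij
  have hone :
      (mycielskian G).dist (some (Sum.inl i)) (some (Sum.inr j)) = 1 ↔ G.dist i j = 1 := by
    simp only [dist_eq_one_iff_adj, adj_inl_inr]
  omega

end mycielskian

lemma two_mul_gutmanIndex {V : Type*} [Fintype V] [DecidableEq V] (H : SimpleGraph V)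
    [DecidableRel H.Adj] :
    2 * gutmanIndex H =
      ∑ p ∈ univ.offDiag, (H.dist p.1 p.2 : ℚ) * H.degree p.1 * H.degree p.2 := by
  have hoff : (univ : Finset V).offDiag = univ.filter fun p : V × V => p.1 ≠ p.2 := by ext; simp
  rw [gutmanIndex, mul_div_cancel₀ _ two_ne_zero, hoff, sum_filter, ← univ_product_univ,
    sum_product]
  simp only [ite_not]

theorem sum_dist_mixed_deg_prod_general (n : ℕ) (G : SimpleGraph (Fin n)) [DecidableRel G.Adj]
    (hdiam : G.diam = 2) :
    ∑ p ∈ Finset.univ.offDiag,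
        ((mycielskian G).dist (some (Sum.inl p.1)) (some (Sum.inr p.2)) : ℚ)
          * G.degree p.1 * G.degree p.2
      = 2 * gutmanIndex G := by
  have hfin : G.ediam ≠ ⊤ := ediam_ne_top_of_diam_ne_zero (by omega)
  rw [two_mul_gutmanIndex]
  refine sum_congr rfl fun p hp => ?_
  obtain ⟨-, -, hne⟩ := mem_offDiag.mp hp
  rw [mycielskian.dist_inl_inr_of_dist_le_two (preconnected_of_ediam_ne_top hfin _ _) hne
    (hdiam ▸ dist_le_diam hfin)]

theorem sum_dist_mixed_deg_prod (n : ℕ) (G : SimpleGraph (Fin n)) [DecidableRel G.Adj]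
    (hconn : G.Connected) (hdiam : G.diam = 2) :
    ∑ p ∈ Finset.univ.offDiag,
        ((mycielskian G).dist (some (Sum.inl p.1)) (some (Sum.inr p.2)) : ℚ)
          * G.degree p.1 * G.degree p.2
      = 2 * gutmanIndex G :=
  sum_dist_mixed_deg_prod_general n G hdiam
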